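/- Every solution to the median problem for {1, g1, g2} lies in the interior: the intersection of the closed balls B̄_{δ(1)}(1), B̄_{δ(g1)}(g1), B̄_{δ(g2)}(g2), where δ(1) = d(1, [g1,g2]), δ(g1) = d(g1, [1,g2]), δ(g2) = d(g2, [1,g1]). -/

import Mathlib

noncomputable def wlen {G : Type*} [Group G] (S : Set G) (g : G) : ℕ :=
  sInf {n : ℕ | ∃ l : List G, (∀ x ∈ l, x ∈ S ∨ x⁻¹ ∈ S) ∧ l.prod = g ∧ l.length = n}

noncomputable def wdist {G : Type*} [Group G] (S : Set G) (g h : G) : ℕ := wlen S (g⁻¹ * h)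

def intv {G : Type*} [Group G] (S : Set G) (a b : G) : Set G :=
  {x | wdist S a x + wdist S x b = wdist S a b}

/-- Distance from a point to a set. -/
noncomputable def dSet {G : Type*} [Group G] (S : Set G) (g : G) (A : Set G) : ℕ :=
  sInf {k : ℕ | ∃ x ∈ A, wdist S g x = k}

noncomputable def sw {G : Type*} [Group G] (S : Set G) (g₁ g₂ h : G) : ℕ :=
  wdist S 1 h + wdist S g₁ h + wdist S g₂ h

section aux

variable {G : Type*} [Group G] {S : Set G}

lemma wlen_set_nonempty (hS : Subgroup.closure S = ⊤) (g : G) :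
    {n : ℕ | ∃ l : List G, (∀ x ∈ l, x ∈ S ∨ x⁻¹ ∈ S) ∧ l.prod = g ∧ l.length = n}.Nonempty := by
  have hg : g ∈ Submonoid.closure (S ∪ S⁻¹) := by
    rw [← Subgroup.closure_toSubmonoid, hS]; trivial
  obtain ⟨l, hl, hprod⟩ := Submonoid.exists_list_of_mem_closure hg
  exact ⟨l.length, l, fun x hx => by rcases hl x hx with h | h; exacts [Or.inl h, Or.inr h],
    hprod, rfl⟩

lemma wlen_exists (hS : Subgroup.closure S = ⊤) (g : G) :
    ∃ l : List G, (∀ x ∈ l, x ∈ S ∨ x⁻¹ ∈ S) ∧ l.prod = g ∧ l.length = wlen S g :=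
  Nat.sInf_mem (wlen_set_nonempty hS g)

lemma wlen_le {g : G} {l : List G} (hl : ∀ x ∈ l, x ∈ S ∨ x⁻¹ ∈ S) (hp : l.prod = g) :
    wlen S g ≤ l.length :=
  Nat.sInf_le ⟨l, hl, hp, rfl⟩

lemma wlen_mul_le (hS : Subgroup.closure S = ⊤) (g h : G) :
    wlen S (g * h) ≤ wlen S g + wlen S h := by
  obtain ⟨l₁, h₁, p₁, n₁⟩ := wlen_exists hS g
  obtain ⟨l₂, h₂, p₂, n₂⟩ := wlen_exists hS h
  have := wlen_le (S := S) (l := l₁ ++ l₂)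
    (fun x hx => by rcases List.mem_append.1 hx with hx | hx; exacts [h₁ x hx, h₂ x hx])
    (by rw [List.prod_append, p₁, p₂])
  simpa [n₁, n₂] using this

lemma wlen_inv_le (hS : Subgroup.closure S = ⊤) (g : G) :
    wlen S g⁻¹ ≤ wlen S g := by
  obtain ⟨l, hl, hp, hn⟩ := wlen_exists hS g
  have := wlen_le (S := S) (l := (l.map (·⁻¹)).reverse)
    (fun x hx => by
      simp only [List.mem_reverse, List.mem_map] at hx
      obtain ⟨y, hy, rfl⟩ := hx
      rcases hl y hy with h | h
      · exact Or.inr (by simpa using h)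
      · exact Or.inl h)
    (by rw [← List.prod_inv_reverse, hp])
  simpa [hn] using this

lemma wlen_inv (hS : Subgroup.closure S = ⊤) (g : G) : wlen S g⁻¹ = wlen S g :=
  le_antisymm (wlen_inv_le hS g) (by simpa using wlen_inv_le hS g⁻¹)

lemma wdist_symm (hS : Subgroup.closure S = ⊤) (g h : G) : wdist S g h = wdist S h g := by
  unfold wdist
  rw [← wlen_inv hS (h⁻¹ * g)]
  simp [mul_comm]

lemma wdist_triangle (hS : Subgroup.closure S = ⊤) (a b c : G) :
    wdist S a c ≤ wdist S a b + wdist S b c := by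
  have := wlen_mul_le hS (a⁻¹ * b) (b⁻¹ * c)
  simpa [wdist, mul_assoc] using this

lemma wdist_self (g : G) : wdist S g g = 0 :=
  Nat.le_zero.1 (by simpa [wdist] using wlen_le (S := S) (g := g⁻¹ * g) (l := []) (by simp) (by simp))

end aux

/-- Every median of `{1, g₁, g₂}` lies in the interior: the intersection of the
closed balls of radii `δ(1), δ(g₁), δ(g₂)` around `1, g₁, g₂` respectively. -/
theorem stmt_12 {G : Type*} [Group G] (S : Set G) (hS : Subgroup.closure S = ⊤)
    (g₁ g₂ : G) (m : G) (hm : ∀ h : G, sw S g₁ g₂ m ≤ sw S g₁ g₂ h) :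
    wdist S 1 m ≤ dSet S 1 (intv S g₁ g₂) ∧
    wdist S g₁ m ≤ dSet S g₁ (intv S 1 g₂) ∧
    wdist S g₂ m ≤ dSet S g₂ (intv S 1 g₁) := by
  refine ⟨?_, ?_, ?_⟩
  · -- δ(1)
    have hne : {k : ℕ | ∃ x ∈ intv S g₁ g₂, wdist S 1 x = k}.Nonempty :=
      ⟨wdist S 1 g₁, g₁, by simp [intv, wdist_self], rfl⟩
    obtain ⟨x, hx, hxd⟩ := Nat.sInf_mem hne
    have hswx : sw S g₁ g₂ x = wdist S 1 x + wdist S g₁ g₂ := by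
      have : wdist S g₁ x + wdist S x g₂ = wdist S g₁ g₂ := hx
      rw [sw, wdist_symm hS g₂ x]
      omega
    have htri : wdist S g₁ g₂ ≤ wdist S g₁ m + wdist S g₂ m := by
      have := wdist_triangle hS g₁ m g₂
      rw [wdist_symm hS m g₂] at this
      omega
    have hmx := hm x
    rw [hswx] at hmx
    unfold sw at hmx
    unfold dSet
    omega
  · -- δ(g₁)
    have hne : {k : ℕ | ∃ x ∈ intv S 1 g₂, wdist S g₁ x = k}.Nonempty :=
      ⟨wdist S g₁ 1, 1, by simp [intv, wdist_self], rfl⟩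
    obtain ⟨x, hx, hxd⟩ := Nat.sInf_mem hne
    have hswx : sw S g₁ g₂ x = wdist S g₁ x + wdist S 1 g₂ := by
      have : wdist S 1 x + wdist S x g₂ = wdist S 1 g₂ := hx
      rw [sw, wdist_symm hS g₂ x]
      omega
    have htri : wdist S 1 g₂ ≤ wdist S 1 m + wdist S g₂ m := by
      have := wdist_triangle hS 1 m g₂
      rw [wdist_symm hS m g₂] at this
      omega
    have hmx := hm x
    rw [hswx] at hmx
    unfold sw at hmx
    unfold dSet
    omega
  · -- δ(g₂)
    have hne : {k : ℕ | ∃ x ∈ intv S 1 g₁, wdist S g₂ x = k}.Nonempty :=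
      ⟨wdist S g₂ 1, 1, by simp [intv, wdist_self], rfl⟩
    obtain ⟨x, hx, hxd⟩ := Nat.sInf_mem hne
    have hswx : sw S g₁ g₂ x = wdist S g₂ x + wdist S 1 g₁ := by
      have : wdist S 1 x + wdist S x g₁ = wdist S 1 g₁ := hx
      rw [sw, wdist_symm hS g₁ x]
      omega
    have htri : wdist S 1 g₁ ≤ wdist S 1 m + wdist S g₁ m := by
      have := wdist_triangle hS 1 m g₁
      rw [wdist_symm hS m g₁] at this
      omega
    have hmx := hm x
    rw [hswx] at hmx
    unfold sw at hmx
    unfold dSet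
    omega
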